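/- arXiv:2207.03369 — 2 statements merged into one kernel-verified Lean document; each statement's English description precedes it below -/
import Mathlib

section
/- Let (L,σ) and (L,σ') be factor systems for (𝒢,𝒩) with the same L. Then (L,σ) and (L,σ') are equivalent (i.e. (L,σ') = h.(L,σ) for some h ∈ C¹(𝒢,𝒩)) if and only if the central 2-cocycle σ⁻¹·σ' is a 2-coboundary in B²(𝒢,Z(𝒩))_L, i.e. there exists h ∈ C¹(𝒢,Z(𝒩)) with σ(x,y)⁻¹σ'(x,y) = h(x)L_x(h(y))h(xy)⁻¹ for all composable (x,y). -/
/-- A groupoid over a unit space `U`, with a total (junk-valued outside composables)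
multiplication. `e : U → G` is the inclusion of units. -/
structure Gpd (G U : Type) where
  s : G → U
  r : G → U
  e : U → G
  mul : G → G → G
  inv : G → G
  s_e : ∀ u, s (e u) = u
  r_e : ∀ u, r (e u) = u
  e_mul : ∀ x, mul (e (r x)) x = x
  mul_e : ∀ x, mul x (e (s x)) = x
  s_inv : ∀ x, s (inv x) = r x
  r_inv : ∀ x, r (inv x) = s x
  inv_mul : ∀ x, mul (inv x) x = e (s x)
  mul_inv : ∀ x, mul x (inv x) = e (r x)
  r_mul : ∀ x y, s x = r y → r (mul x y) = r x
  s_mul : ∀ x y, s x = r y → s (mul x y) = s y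
  assoc : ∀ x y z, s x = r y → s y = r z → mul (mul x y) z = mul x (mul y z)

/-- A group bundle over `U`: a total space `N` with projection `p`, each fiber being a group
(operations are total, with group laws holding fiberwise). -/
structure GrpBundle (N U : Type) where
  p : N → U
  one : U → N
  mul : N → N → N
  inv : N → N
  p_one : ∀ u, p (one u) = u
  p_mul : ∀ n m, p n = p m → p (mul n m) = p n
  p_inv : ∀ n, p (inv n) = p n
  one_mul : ∀ n, mul (one (p n)) n = n
  mul_one : ∀ n, mul n (one (p n)) = n
  inv_mul : ∀ n, mul (inv n) n = one (p n)
  mul_inv : ∀ n, mul n (inv n) = one (p n)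
  assoc : ∀ a b c, p a = p b → p b = p c → mul (mul a b) c = mul a (mul b c)

/-- A pair `(L, σ)` satisfying all the conditions of a factor system for `(𝒢, 𝒩)` except
possibly the twisted cocycle condition (F2): `L` is a family of fiberwise group isomorphisms
`L x : N_{s x} → N_{r x}`, trivial on units, and `σ : 𝒢⁽²⁾ → 𝒩` is normalized with
`σ (x, y) ∈ N_{r x}`, satisfying the twisted action condition (F1). -/
structure PreFS {G U N : Type} (𝒢 : Gpd G U) (𝒩 : GrpBundle N U) where
  L : G → N → N
  σ : G → G → N
  L_fib : ∀ x n, 𝒩.p n = 𝒢.s x → 𝒩.p (L x n) = 𝒢.r x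
  L_mul : ∀ x n m, 𝒩.p n = 𝒢.s x → 𝒩.p m = 𝒢.s x →
    L x (𝒩.mul n m) = 𝒩.mul (L x n) (L x m)
  L_bij : ∀ x, Set.BijOn (L x) {n | 𝒩.p n = 𝒢.s x} {n | 𝒩.p n = 𝒢.r x}
  L_e : ∀ u n, 𝒩.p n = u → L (𝒢.e u) n = n
  σ_fib : ∀ x y, 𝒢.s x = 𝒢.r y → 𝒩.p (σ x y) = 𝒢.r x
  σ_e_left : ∀ x, σ (𝒢.e (𝒢.r x)) x = 𝒩.one (𝒢.r x)
  σ_e_right : ∀ x, σ x (𝒢.e (𝒢.s x)) = 𝒩.one (𝒢.r x)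
  F1 : ∀ x y n, 𝒢.s x = 𝒢.r y → 𝒩.p n = 𝒢.s y →
    L x (L y n) = 𝒩.mul (𝒩.mul (σ x y) (L (𝒢.mul x y) n)) (𝒩.inv (σ x y))

/-- A factor system `(L, σ)` for `(𝒢, 𝒩)`: conditions (F1) and (F2). -/
structure FS {G U N : Type} (𝒢 : Gpd G U) (𝒩 : GrpBundle N U) extends PreFS 𝒢 𝒩 where
  F2 : ∀ x y z, 𝒢.s x = 𝒢.r y → 𝒢.s y = 𝒢.r z →
    𝒩.mul (σ x y) (σ (𝒢.mul x y) z) = 𝒩.mul (L x (σ y z)) (σ x (𝒢.mul y z))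

/-- The action of `h ∈ C¹(𝒢,𝒩)` on the `L`-part of a factor system:
`(h.L)_x(n) = h(x) L_x(n) h(x)⁻¹`. -/
def actL {G U N : Type} (𝒩 : GrpBundle N U) (h : G → N) (L : G → N → N) : G → N → N :=
  fun x n => 𝒩.mul (𝒩.mul (h x) (L x n)) (𝒩.inv (h x))

/-- The action of `h ∈ C¹(𝒢,𝒩)` on the `σ`-part of a factor system:
`(h.σ)(x,y) = h(x) L_x(h(y)) σ(x,y) h(xy)⁻¹`. -/
def actS {G U N : Type} (𝒢 : Gpd G U) (𝒩 : GrpBundle N U) (h : G → N)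
    (L : G → N → N) (σ : G → G → N) : G → G → N :=
  fun x y => 𝒩.mul (𝒩.mul (𝒩.mul (h x) (L x (h y))) (σ x y)) (𝒩.inv (h (𝒢.mul x y)))

/-! Both sides differ only in what they ask of `h`: that `h.L = L`, which says exactly that each
`h(x)` is central in `N_{r x}`, and a condition on `σ'`. Once `h(x)` and hence `h(x) L_x(h(y))`
are central (`L_x` is a fiber isomorphism), `σ' = h(x) L_x(h(y)) σ h(xy)⁻¹` can be solved for
`σ⁻¹σ'`, which is the coboundary condition. -/

namespace GrpBundle

variable {N U : Type} (B : GrpBundle N U)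

def Fib (u : U) : Type := {n : N // B.p n = u}

instance (u : U) : Group (B.Fib u) where
  mul a b := ⟨B.mul a.1 b.1, by rw [B.p_mul a.1 b.1 (a.2.trans b.2.symm), a.2]⟩
  one := ⟨B.one u, B.p_one u⟩
  inv a := ⟨B.inv a.1, (B.p_inv a.1).trans a.2⟩
  mul_assoc a b c := Subtype.ext (B.assoc _ _ _ (a.2.trans b.2.symm) (b.2.trans c.2.symm))
  one_mul a := Subtype.ext (by have := B.one_mul a.1; rwa [a.2] at this)
  mul_one a := Subtype.ext (by have := B.mul_one a.1; rwa [a.2] at this)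
  inv_mul_cancel a := Subtype.ext (by have := B.inv_mul a.1; rwa [a.2] at this)

def IsCentral (a : N) : Prop := ∀ m, B.p m = B.p a → B.mul a m = B.mul m a

variable {B}

theorem Fib.ext_iff {u : U} {a b : B.Fib u} : a = b ↔ a.1 = b.1 := Subtype.ext_iff

theorem conj_eq_self_iff {a m : N} (hm : B.p m = B.p a) :
    B.mul (B.mul a m) (B.inv a) = m ↔ B.mul a m = B.mul m a := by
  let A : B.Fib (B.p a) := ⟨a, rfl⟩
  let M : B.Fib (B.p a) := ⟨m, hm⟩
  show (A * M * A⁻¹).1 = M.1 ↔ (A * M).1 = (M * A).1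
  simp only [← Fib.ext_iff]
  exact mul_inv_eq_iff_eq_mul

theorem IsCentral.mul {a b : N} (ha : B.IsCentral a) (hb : B.IsCentral b) (hab : B.p b = B.p a) :
    B.IsCentral (B.mul a b) := by
  intro m hm
  rw [B.p_mul a b hab.symm] at hm
  calc B.mul (B.mul a b) m = B.mul a (B.mul b m) := B.assoc a b m hab.symm (hab.trans hm.symm)
    _ = B.mul a (B.mul m b) := by rw [hb m (hm.trans hab.symm)]
    _ = B.mul (B.mul a m) b := (B.assoc a m b hm.symm (hm.trans hab.symm)).symm
    _ = B.mul (B.mul m a) b := by rw [ha m hm]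
    _ = B.mul m (B.mul a b) := B.assoc m a b hm hab.symm

theorem eq_mul_mul_inv_iff_inv_mul_eq {c s s' e : N} (hc : B.IsCentral c) (hs : B.p s = B.p c)
    (hs' : B.p s' = B.p c) (he : B.p e = B.p c) :
    s' = B.mul (B.mul c s) (B.inv e) ↔ B.mul (B.inv s) s' = B.mul c (B.inv e) := by
  let C : B.Fib (B.p c) := ⟨c, rfl⟩
  let S : B.Fib (B.p c) := ⟨s, hs⟩
  let S' : B.Fib (B.p c) := ⟨s', hs'⟩
  let E : B.Fib (B.p c) := ⟨e, he⟩
  have hCS : C * S = S * C := Subtype.ext (hc s hs)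
  show S'.1 = (C * S * E⁻¹).1 ↔ (S⁻¹ * S').1 = (C * E⁻¹).1
  simp only [← Fib.ext_iff]
  rw [hCS, mul_assoc, inv_mul_eq_iff_eq_mul]

end GrpBundle

namespace PreFS

variable {G U N : Type} {𝒢 : Gpd G U} {𝒩 : GrpBundle N U} (P : PreFS 𝒢 𝒩)

theorem isCentral_L {x : G} {n : N} (hn : 𝒩.p n = 𝒢.s x) (hc : 𝒩.IsCentral n) :
    𝒩.IsCentral (P.L x n) := by
  intro m hm
  rw [P.L_fib x n hn] at hm
  obtain ⟨k, hk, rfl⟩ := (P.L_bij x).surjOn hm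
  rw [← P.L_mul x n k hn hk, hc k (hk.trans hn.symm), P.L_mul x k n hk hn]

theorem L_eq_actL_iff_isCentral {h : G → N} {x : G} (hf : 𝒩.p (h x) = 𝒢.r x) :
    (∀ n, 𝒩.p n = 𝒢.s x → P.L x n = actL 𝒩 h P.L x n) ↔ 𝒩.IsCentral (h x) := by
  constructor
  · intro hfix m hm
    obtain ⟨n, hn, rfl⟩ := (P.L_bij x).surjOn (hm.trans hf)
    exact (GrpBundle.conj_eq_self_iff hm).1 (hfix n hn).symm
  · intro hc n hn
    have hm : 𝒩.p (P.L x n) = 𝒩.p (h x) := (P.L_fib x n hn).trans hf.symm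
    exact ((GrpBundle.conj_eq_self_iff hm).2 (hc _ hm)).symm

theorem eq_actS_iff {h : G → N} (hf : ∀ x, 𝒩.p (h x) = 𝒢.r x) (hc : ∀ x, 𝒩.IsCentral (h x))
    {x y : G} (hxy : 𝒢.s x = 𝒢.r y) {τ : N} (hτ : 𝒩.p τ = 𝒢.r x) :
    τ = actS 𝒢 𝒩 h P.L P.σ x y ↔
      𝒩.mul (𝒩.inv (P.σ x y)) τ =
        𝒩.mul (𝒩.mul (h x) (P.L x (h y))) (𝒩.inv (h (𝒢.mul x y))) := by
  have hLy : 𝒩.p (P.L x (h y)) = 𝒢.r x := P.L_fib x (h y) ((hf y).trans hxy.symm)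
  have hp : 𝒩.p (𝒩.mul (h x) (P.L x (h y))) = 𝒢.r x :=
    (𝒩.p_mul _ _ ((hf x).trans hLy.symm)).trans (hf x)
  rw [← hp] at hτ
  exact GrpBundle.eq_mul_mul_inv_iff_inv_mul_eq
    ((hc x).mul (P.isCentral_L ((hf y).trans hxy.symm) (hc y)) (hLy.trans (hf x).symm))
    ((P.σ_fib x y hxy).trans hp.symm) hτ
    (by rw [hp, hf, 𝒢.r_mul x y hxy])

end PreFS

/-- Let `(L,σ)` and `(L,σ')` be factor systems with the same `L`.  Then they
are equivalent (i.e. `(L,σ') = h.(L,σ)` for some `h ∈ C¹(𝒢,𝒩)`) iff the central 2-cocycle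
`σ⁻¹·σ'` is a coboundary, i.e. there is a central `h ∈ C¹(𝒢,Z(𝒩))` with
`σ(x,y)⁻¹σ'(x,y) = h(x) L_x(h(y)) h(xy)⁻¹` for all composable `(x,y)`. -/
theorem stmt10 {G U N : Type} (𝒢 : Gpd G U) (𝒩 : GrpBundle N U) (F F' : FS 𝒢 𝒩)
    (hL : F'.L = F.L) :
    (∃ h : G → N, (∀ x, 𝒩.p (h x) = 𝒢.r x) ∧ (∀ u, h (𝒢.e u) = 𝒩.one u) ∧
        (∀ x n, 𝒩.p n = 𝒢.s x → F'.L x n = actL 𝒩 h F.L x n) ∧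
        (∀ x y, 𝒢.s x = 𝒢.r y → F'.σ x y = actS 𝒢 𝒩 h F.L F.σ x y)) ↔
    (∃ h : G → N, (∀ x, 𝒩.p (h x) = 𝒢.r x) ∧ (∀ u, h (𝒢.e u) = 𝒩.one u) ∧
        -- h is central
        (∀ x m, 𝒩.p m = 𝒢.r x → 𝒩.mul (h x) m = 𝒩.mul m (h x)) ∧
        -- σ⁻¹·σ' = d¹_L(h)
        (∀ x y, 𝒢.s x = 𝒢.r y →
          𝒩.mul (𝒩.inv (F.σ x y)) (F'.σ x y) =
            𝒩.mul (𝒩.mul (h x) (F.L x (h y))) (𝒩.inv (h (𝒢.mul x y))))) := by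
  have hcentral : ∀ h : G → N, (∀ x, 𝒩.p (h x) = 𝒢.r x) →
      ((∀ x m, 𝒩.p m = 𝒢.r x → 𝒩.mul (h x) m = 𝒩.mul m (h x)) ↔ ∀ x, 𝒩.IsCentral (h x)) :=
    fun h hf => by simp only [GrpBundle.IsCentral, hf]
  constructor
  · rintro ⟨h, hf, he, hLh, hσ⟩
    have hc : ∀ x, 𝒩.IsCentral (h x) := fun x =>
      (F.L_eq_actL_iff_isCentral (hf x)).1 fun n hn => hL ▸ hLh x n hn
    exact ⟨h, hf, he, (hcentral h hf).2 hc, fun x y hxy =>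
      (F.eq_actS_iff hf hc hxy (F'.σ_fib x y hxy)).1 (hσ x y hxy)⟩
  · rintro ⟨h, hf, he, hcent, hcob⟩
    have hc := (hcentral h hf).1 hcent
    exact ⟨h, hf, he, fun x => hL ▸ (F.L_eq_actL_iff_isCentral (hf x)).2 (hc x), fun x y hxy =>
      (F.eq_actS_iff hf hc hxy (F'.σ_fib x y hxy)).2 (hcob x y hxy)⟩
end

section
/- Let 𝒢 be a groupoid, ℛ a unital ring bundle over 𝒢⁽⁰⁾, and (M,τ) a factor system for (𝒢,ℛ). Then for all x, y, z ∈ 𝒢 with xy = z the following identities hold: (1) τ(x,x⁻¹) = M_x(τ(x⁻¹,x)); (2) τ(z,y⁻¹) = τ(x,y)⁻¹M_x(τ(y,y⁻¹)); (3) τ(z,y⁻¹)τ(x,x⁻¹) = M_z(τ(y⁻¹,x⁻¹))τ(z,z⁻¹); (4) τ(z,y⁻¹)M_x(n) = M_z(M_{y⁻¹}(n))τ(z,y⁻¹) for all n ∈ R_{s(x)}. -/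
/-- Transport along an equality of base points of a bundle of types. -/
def tr {U : Type} (Rf : U → Type) {u v : U} (h : u = v) (a : Rf u) : Rf v := h ▸ a

/-- A factor system `(M,τ)` for `(𝒢,ℛ)`, where `ℛ` is the unital ring bundle with fibers
`Rf u`: `M_x : R_{s x} → R_{r x}` are ring isomorphisms which are trivial on units, and
`τ(x,y) ∈ R_{r x}ˣ` is normalized and satisfies the conditions (C1) and (C2). -/
structure RingFS {G U : Type} (𝒢 : Gpd G U) (Rf : U → Type) [∀ u, Ring (Rf u)] where
  M : (x : G) → Rf (𝒢.s x) → Rf (𝒢.r x)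
  τ : (x y : G) → Rf (𝒢.r x)
  τinv : (x y : G) → Rf (𝒢.r x)
  M_add : ∀ x a b, M x (a + b) = M x a + M x b
  M_mul : ∀ x a b, M x (a * b) = M x a * M x b
  M_one : ∀ x, M x 1 = 1
  M_bij : ∀ x, Function.Bijective (M x)
  M_e : ∀ u a, M (𝒢.e u) a = tr Rf ((𝒢.s_e u).trans (𝒢.r_e u).symm) a
  τ_mul_τinv : ∀ x y, 𝒢.s x = 𝒢.r y → τ x y * τinv x y = 1
  τinv_mul_τ : ∀ x y, 𝒢.s x = 𝒢.r y → τinv x y * τ x y = 1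
  τ_e_left : ∀ x, τ (𝒢.e (𝒢.r x)) x = 1
  τ_e_right : ∀ x, τ x (𝒢.e (𝒢.s x)) = 1
  C1 : ∀ x y (h : 𝒢.s x = 𝒢.r y) (n : Rf (𝒢.s y)),
    M x (tr Rf h.symm (M y n)) =
      τ x y * tr Rf (𝒢.r_mul x y h) (M (𝒢.mul x y) (tr Rf (𝒢.s_mul x y h).symm n)) * τinv x y
  C2 : ∀ x y z (hxy : 𝒢.s x = 𝒢.r y) (hyz : 𝒢.s y = 𝒢.r z),
    τ x y * tr Rf (𝒢.r_mul x y hxy) (τ (𝒢.mul x y) z) =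
      M x (tr Rf hxy.symm (τ y z)) * τ x (𝒢.mul y z)

/-!
Each identity is one instance of (C2) or (C1), simplified by the groupoid relations
`x x⁻¹ = r x`, `(x y) y⁻¹ = x`, `(x y)⁻¹ = y⁻¹ x⁻¹` and the normalization of `τ` on units:
(1) is (C2) at `(x, x⁻¹, x)`, (2) is (C2) at `(x, y, y⁻¹)`, (3) is (C2) at `(x y, y⁻¹, x⁻¹)`
and (4) is (C1) at `(x y, y⁻¹)`.
-/

namespace Gpd

variable {G U : Type} (𝒢 : Gpd G U)

theorem mul_mul_inv_cancel {x y : G} (h : 𝒢.s x = 𝒢.r y) :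
    𝒢.mul (𝒢.mul x y) (𝒢.inv y) = x := by
  rw [𝒢.assoc x y (𝒢.inv y) h (𝒢.r_inv y).symm, 𝒢.mul_inv y, ← h, 𝒢.mul_e]

theorem eq_inv_of_mul_eq_e {a b : G} (h : 𝒢.s a = 𝒢.r b)
    (hab : 𝒢.mul a b = 𝒢.e (𝒢.r a)) : b = 𝒢.inv a :=
  calc b = 𝒢.mul (𝒢.e (𝒢.r b)) b := (𝒢.e_mul b).symm
    _ = 𝒢.mul (𝒢.mul (𝒢.inv a) a) b := by rw [← h, ← 𝒢.inv_mul a]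
    _ = 𝒢.mul (𝒢.inv a) (𝒢.mul a b) := 𝒢.assoc _ _ _ (𝒢.s_inv a) h
    _ = 𝒢.mul (𝒢.inv a) (𝒢.e (𝒢.s (𝒢.inv a))) := by rw [hab, 𝒢.s_inv]
    _ = 𝒢.inv a := 𝒢.mul_e _

theorem mul_inv_rev {x y : G} (h : 𝒢.s x = 𝒢.r y) :
    𝒢.inv (𝒢.mul x y) = 𝒢.mul (𝒢.inv y) (𝒢.inv x) := by
  have h' : 𝒢.s (𝒢.inv y) = 𝒢.r (𝒢.inv x) :=
    (𝒢.s_inv y).trans (h.symm.trans (𝒢.r_inv x).symm)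
  refine (𝒢.eq_inv_of_mul_eq_e ?_ ?_).symm
  · rw [𝒢.s_mul x y h, 𝒢.r_mul _ _ h', 𝒢.r_inv]
  · calc 𝒢.mul (𝒢.mul x y) (𝒢.mul (𝒢.inv y) (𝒢.inv x))
        = 𝒢.mul (𝒢.mul (𝒢.mul x y) (𝒢.inv y)) (𝒢.inv x) :=
          (𝒢.assoc _ _ _ ((𝒢.s_mul x y h).trans (𝒢.r_inv y).symm) h').symm
      _ = 𝒢.e (𝒢.r (𝒢.mul x y)) := by
          rw [𝒢.mul_mul_inv_cancel h, 𝒢.mul_inv x, 𝒢.r_mul x y h]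

end Gpd

section Transport

variable {U : Type} (Rf : U → Type)

theorem tr_tr {u v w : U} (h₁ : u = v) (h₂ : v = w) (a : Rf u) :
    tr Rf h₂ (tr Rf h₁ a) = tr Rf (h₁.trans h₂) a := by
  subst h₁ h₂; rfl

theorem tr_one [∀ u, One (Rf u)] {u v : U} (h : u = v) : tr Rf h (1 : Rf u) = 1 := by
  subst h; rfl

theorem tr_heq {u v : U} (h : u = v) (a : Rf u) : HEq (tr Rf h a) a := by
  subst h; rfl

end Transport

namespace RingFS

variable {G U : Type} {𝒢 : Gpd G U} {Rf : U → Type} [∀ u, Ring (Rf u)] (F : RingFS 𝒢 Rf)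

theorem tr_τ_congr_left {a b : G} (hab : a = b) (c : G) {u : U} (ha : 𝒢.r a = u)
    (hb : 𝒢.r b = u) : tr Rf ha (F.τ a c) = tr Rf hb (F.τ b c) := by
  subst hab; rfl

theorem tr_M_congr {a b : G} (hab : a = b) {u : U} (ha : 𝒢.r a = u) (hb : 𝒢.r b = u)
    {n : Rf (𝒢.s a)} {n' : Rf (𝒢.s b)} (hn : HEq n n') :
    tr Rf ha (F.M a n) = tr Rf hb (F.M b n') := by
  subst hab; cases hn; rfl

theorem tr_τ_eq_one_of_eq_e_left {a b : G} (h : a = 𝒢.e (𝒢.r b)) (hr : 𝒢.r a = 𝒢.r b) :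
    tr Rf hr (F.τ a b) = 1 := by
  subst h; rw [F.τ_e_left b, tr_one]

theorem τ_eq_one_of_eq_e_right {a b : G} (h : b = 𝒢.e (𝒢.s a)) : F.τ a b = 1 := by
  subst h; exact F.τ_e_right a

theorem eq_τinv_mul_of_τ_mul_eq {x y : G} (h : 𝒢.s x = 𝒢.r y) {a b : Rf (𝒢.r x)}
    (hab : F.τ x y * a = b) : a = F.τinv x y * b := by
  rw [← hab, ← mul_assoc, F.τinv_mul_τ x y h, one_mul]

theorem mul_τinv_mul_τ {x y : G} (h : 𝒢.s x = 𝒢.r y) (a : Rf (𝒢.r x)) :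
    a * F.τinv x y * F.τ x y = a := by
  rw [mul_assoc, F.τinv_mul_τ x y h, mul_one]

theorem τ_self_inv (x : G) :
    F.τ x (𝒢.inv x) = F.M x (tr Rf (𝒢.r_inv x) (F.τ (𝒢.inv x) x)) := by
  have hc2 := F.C2 x (𝒢.inv x) x (𝒢.r_inv x).symm (𝒢.s_inv x)
  rwa [F.tr_τ_eq_one_of_eq_e_left (𝒢.mul_inv x), F.τ_eq_one_of_eq_e_right (𝒢.inv_mul x),
    mul_one, mul_one] at hc2

theorem tr_τ_mul_inv {x y : G} (h : 𝒢.s x = 𝒢.r y) :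
    tr Rf (𝒢.r_mul x y h) (F.τ (𝒢.mul x y) (𝒢.inv y)) =
      F.τinv x y * F.M x (tr Rf h.symm (F.τ y (𝒢.inv y))) := by
  have hc2 := F.C2 x y (𝒢.inv y) h (𝒢.r_inv y).symm
  rw [F.τ_eq_one_of_eq_e_right ((𝒢.mul_inv y).trans (congrArg 𝒢.e h.symm)), mul_one] at hc2
  exact F.eq_τinv_mul_of_τ_mul_eq h hc2

theorem τ_mul_inv_mul_τ_self_inv {x y : G} (h : 𝒢.s x = 𝒢.r y) :
    F.τ (𝒢.mul x y) (𝒢.inv y) * tr Rf (𝒢.r_mul x y h).symm (F.τ x (𝒢.inv x)) =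
      F.M (𝒢.mul x y)
          (tr Rf ((𝒢.r_inv y).trans (𝒢.s_mul x y h).symm) (F.τ (𝒢.inv y) (𝒢.inv x))) *
        F.τ (𝒢.mul x y) (𝒢.inv (𝒢.mul x y)) := by
  have hxy : 𝒢.s (𝒢.mul x y) = 𝒢.r (𝒢.inv y) := (𝒢.s_mul x y h).trans (𝒢.r_inv y).symm
  have hc2 := F.C2 (𝒢.mul x y) (𝒢.inv y) (𝒢.inv x) hxy
    ((𝒢.s_inv y).trans (h.symm.trans (𝒢.r_inv x).symm))
  rwa [F.tr_τ_congr_left (𝒢.mul_mul_inv_cancel h) (𝒢.inv x) _ (𝒢.r_mul x y h).symm,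
    ← 𝒢.mul_inv_rev h] at hc2

theorem τ_mul_inv_mul_M {x y : G} (h : 𝒢.s x = 𝒢.r y) (n : Rf (𝒢.s x)) :
    F.τ (𝒢.mul x y) (𝒢.inv y) * tr Rf (𝒢.r_mul x y h).symm (F.M x n) =
      F.M (𝒢.mul x y)
          (tr Rf ((𝒢.r_inv y).trans (𝒢.s_mul x y h).symm)
            (F.M (𝒢.inv y) (tr Rf (h.trans (𝒢.s_inv y).symm) n))) *
        F.τ (𝒢.mul x y) (𝒢.inv y) := by
  have hxy : 𝒢.s (𝒢.mul x y) = 𝒢.r (𝒢.inv y) := (𝒢.s_mul x y h).trans (𝒢.r_inv y).symm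
  have hc1 := F.C1 (𝒢.mul x y) (𝒢.inv y) hxy (tr Rf (h.trans (𝒢.s_inv y).symm) n)
  have hM : tr Rf (𝒢.r_mul (𝒢.mul x y) (𝒢.inv y) hxy)
        (F.M (𝒢.mul (𝒢.mul x y) (𝒢.inv y))
          (tr Rf (𝒢.s_mul (𝒢.mul x y) (𝒢.inv y) hxy).symm
            (tr Rf (h.trans (𝒢.s_inv y).symm) n))) =
      tr Rf (𝒢.r_mul x y h).symm (F.M x n) := by
    refine F.tr_M_congr (𝒢.mul_mul_inv_cancel h) _ _ ?_
    rw [tr_tr]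
    exact tr_heq Rf _ n
  rw [hc1, hM, F.mul_τinv_mul_τ hxy]

end RingFS

/-- For a factor system `(M,τ)` for `(𝒢,ℛ)` and all `x, y, z ∈ 𝒢` with
`s x = r y` and `z = xy` one has:
(1) `τ(x,x⁻¹) = M_x(τ(x⁻¹,x))`;
(2) `τ(z,y⁻¹) = τ(x,y)⁻¹ M_x(τ(y,y⁻¹))`;
(3) `τ(z,y⁻¹) τ(x,x⁻¹) = M_z(τ(y⁻¹,x⁻¹)) τ(z,z⁻¹)`;
(4) `τ(z,y⁻¹) M_x(n) = M_z(M_{y⁻¹}(n)) τ(z,y⁻¹)` for all `n ∈ R_{s x}`. -/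
theorem stmt15 {G U : Type} (𝒢 : Gpd G U) (Rf : U → Type) [∀ u, Ring (Rf u)]
    (F : RingFS 𝒢 Rf) :
    -- (1)
    (∀ x, F.τ x (𝒢.inv x) = F.M x (tr Rf (𝒢.r_inv x) (F.τ (𝒢.inv x) x))) ∧
    -- (2)
    (∀ x y (h : 𝒢.s x = 𝒢.r y),
      tr Rf (𝒢.r_mul x y h) (F.τ (𝒢.mul x y) (𝒢.inv y)) =
        F.τinv x y * F.M x (tr Rf h.symm (F.τ y (𝒢.inv y)))) ∧
    -- (3)
    (∀ x y (h : 𝒢.s x = 𝒢.r y),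
      F.τ (𝒢.mul x y) (𝒢.inv y) *
          tr Rf (𝒢.r_mul x y h).symm (F.τ x (𝒢.inv x)) =
        F.M (𝒢.mul x y)
            (tr Rf ((𝒢.r_inv y).trans (𝒢.s_mul x y h).symm)
              (F.τ (𝒢.inv y) (𝒢.inv x))) *
          F.τ (𝒢.mul x y) (𝒢.inv (𝒢.mul x y))) ∧
    -- (4)
    (∀ x y (h : 𝒢.s x = 𝒢.r y) (n : Rf (𝒢.s x)),
      F.τ (𝒢.mul x y) (𝒢.inv y) * tr Rf (𝒢.r_mul x y h).symm (F.M x n) =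
        F.M (𝒢.mul x y)
            (tr Rf ((𝒢.r_inv y).trans (𝒢.s_mul x y h).symm)
              (F.M (𝒢.inv y) (tr Rf (h.trans (𝒢.s_inv y).symm) n))) *
          F.τ (𝒢.mul x y) (𝒢.inv y)) :=
  ⟨F.τ_self_inv, fun _ _ => F.tr_τ_mul_inv, fun _ _ => F.τ_mul_inv_mul_τ_self_inv,
    fun _ _ => F.τ_mul_inv_mul_M⟩
end
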